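/- arXiv:1703.10325 — 3 statements merged into one kernel-verified Lean document; each statement's English description precedes it below -/
import Mathlib

section
/- Let n ≥ 1 and Δ(t) = ∑_{i=0}^{n-1}(t^{4i} - t^{4i+1}) + t^{4n-1} + ∑_{i=0}^{n-1}(t^{8n-2-4i} - t^{8n-3-4i}). Writing the exponents of nonzero coefficients in decreasing order as e_1 > e_2 > ... > e_{4n+1}, the list of gaps (e_1 - e_2, e_3 - e_4, ..., e_{4n-1} - e_{4n}) equals (1 repeated n times, 2, 3 repeated n-1 times). -/
open Polynomial Finset

/-- uniqueness of strictly decreasing enumerations -/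
lemma enum_unique (N : ℕ) (e f : ℕ → ℕ)
    (he : ∀ j₁ j₂, j₁ < j₂ → j₂ < N → e j₂ < e j₁)
    (hf : ∀ j₁ j₂, j₁ < j₂ → j₂ < N → f j₂ < f j₁)
    (him : ∀ k, (∃ j < N, e j = k) ↔ (∃ j < N, f j = k)) :
    ∀ j < N, e j = f j := by
  intro j
  induction j using Nat.strong_induction_on with
  | _ j ih =>
  intro hj
  obtain ⟨j1, hj1, hfj1⟩ := (him (e j)).mp ⟨j, hj, rfl⟩
  obtain ⟨j2, hj2, hej2⟩ := (him (f j)).mpr ⟨j, hj, rfl⟩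
  have h1 : e j ≤ f j := by
    rcases lt_trichotomy j1 j with h | h | h
    · exfalso
      have := ih j1 h (lt_trans h hj)
      have := he j1 j h hj
      omega
    · rw [h] at hfj1; omega
    · have := hf j j1 h hj1
      omega
  have h2 : f j ≤ e j := by
    rcases lt_trichotomy j2 j with h | h | h
    · exfalso
      have := ih j2 h (lt_trans h hj)
      have := hf j2 j h hj
      omega
    · rw [h] at hej2; omega
    · have := he j j2 h hj2
      omega
  omega

lemma sum_indicator (n k : ℕ) (a : ℕ → ℕ) (ha : ∀ i < n, ∀ j < n, a i = a j → i = j) :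
    (∑ i ∈ range n, if k = a i then (1 : ℤ) else 0) =
      if ∃ i < n, k = a i then 1 else 0 := by
  by_cases h : ∃ i < n, k = a i
  · obtain ⟨i, hi, hik⟩ := h
    rw [if_pos ⟨i, hi, hik⟩, Finset.sum_eq_single_of_mem i (mem_range.mpr hi)]
    · simp [hik]
    · intro j hj hji
      rw [if_neg]
      intro hjk
      exact hji (ha j (mem_range.mp hj) i hi (by omega))
  · rw [if_neg h, Finset.sum_eq_zero]
    intro i hi
    rw [if_neg]
    intro hik
    exact h ⟨i, mem_range.mp hi, hik⟩

lemma coeff_ne (n : ℕ) (hn : 1 ≤ n) (k : ℕ) :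
    ((∑ i ∈ range n, ((X : Polynomial ℤ) ^ (4 * i) - X ^ (4 * i + 1))) + X ^ (4 * n - 1) +
        ∑ i ∈ range n, ((X : Polynomial ℤ) ^ (8 * n - 2 - 4 * i) - X ^ (8 * n - 3 - 4 * i))).coeff k ≠ 0 ↔
      ((∃ i < n, k = 4 * i) ∨ (∃ i < n, k = 4 * i + 1) ∨ k = 4 * n - 1 ∨
        (∃ i < n, k = 8 * n - 2 - 4 * i) ∨ (∃ i < n, k = 8 * n - 3 - 4 * i)) := by
  have expand :
      ((∑ i ∈ range n, ((X : Polynomial ℤ) ^ (4 * i) - X ^ (4 * i + 1))) + X ^ (4 * n - 1) +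
        ∑ i ∈ range n, ((X : Polynomial ℤ) ^ (8 * n - 2 - 4 * i) - X ^ (8 * n - 3 - 4 * i))).coeff k =
      ((if ∃ i < n, k = 4 * i then 1 else 0) - (if ∃ i < n, k = 4 * i + 1 then 1 else 0))
        + (if k = 4 * n - 1 then 1 else 0)
        + ((if ∃ i < n, k = 8 * n - 2 - 4 * i then 1 else 0)
            - (if ∃ i < n, k = 8 * n - 3 - 4 * i then 1 else 0)) := by
    rw [coeff_add, coeff_add, finset_sum_coeff, finset_sum_coeff]
    simp only [coeff_sub, coeff_X_pow]
    rw [Finset.sum_sub_distrib, Finset.sum_sub_distrib,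
      sum_indicator n k (fun i => 4 * i) (by intro i hi j hj h; omega),
      sum_indicator n k (fun i => 4 * i + 1) (by intro i hi j hj h; omega),
      sum_indicator n k (fun i => 8 * n - 2 - 4 * i) (by intro i hi j hj h; omega),
      sum_indicator n k (fun i => 8 * n - 3 - 4 * i) (by intro i hi j hj h; omega)]
  rw [expand]
  by_cases h1 : ∃ i < n, k = 4 * i
  · have h2 : ¬ ∃ i < n, k = 4 * i + 1 := by
      rintro ⟨j, hj, rfl⟩; obtain ⟨i, hi, hk⟩ := h1; omega
    have h3 : ¬ k = 4 * n - 1 := by obtain ⟨i, hi, hk⟩ := h1; omega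
    have h4 : ¬ ∃ i < n, k = 8 * n - 2 - 4 * i := by
      rintro ⟨j, hj, rfl⟩; obtain ⟨i, hi, hk⟩ := h1; omega
    have h5 : ¬ ∃ i < n, k = 8 * n - 3 - 4 * i := by
      rintro ⟨j, hj, rfl⟩; obtain ⟨i, hi, hk⟩ := h1; omega
    simp only [if_pos h1, if_neg h2, if_neg h3, if_neg h4, if_neg h5]
    simp [h1, h2, h3, h4, h5]
  by_cases h2 : ∃ i < n, k = 4 * i + 1
  · have h3 : ¬ k = 4 * n - 1 := by obtain ⟨i, hi, hk⟩ := h2; omega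
    have h4 : ¬ ∃ i < n, k = 8 * n - 2 - 4 * i := by
      rintro ⟨j, hj, rfl⟩; obtain ⟨i, hi, hk⟩ := h2; omega
    have h5 : ¬ ∃ i < n, k = 8 * n - 3 - 4 * i := by
      rintro ⟨j, hj, rfl⟩; obtain ⟨i, hi, hk⟩ := h2; omega
    simp only [if_neg h1, if_pos h2, if_neg h3, if_neg h4, if_neg h5]
    simp [h1, h2, h3, h4, h5]
  by_cases h3 : k = 4 * n - 1
  · have h4 : ¬ ∃ i < n, k = 8 * n - 2 - 4 * i := by
      rintro ⟨j, hj, rfl⟩; omega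
    have h5 : ¬ ∃ i < n, k = 8 * n - 3 - 4 * i := by
      rintro ⟨j, hj, rfl⟩; omega
    simp only [if_neg h1, if_neg h2, if_pos h3, if_neg h4, if_neg h5]
    simp [h1, h2, h3, h4, h5]
  by_cases h4 : ∃ i < n, k = 8 * n - 2 - 4 * i
  · have h5 : ¬ ∃ i < n, k = 8 * n - 3 - 4 * i := by
      rintro ⟨j, hj, rfl⟩; obtain ⟨i, hi, hk⟩ := h4; omega
    simp only [if_neg h1, if_neg h2, if_neg h3, if_pos h4, if_neg h5]
    simp [h1, h2, h3, h4, h5]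
  by_cases h5 : ∃ i < n, k = 8 * n - 3 - 4 * i
  · simp only [if_neg h1, if_neg h2, if_neg h3, if_neg h4, if_pos h5]
    simp [h1, h2, h3, h4, h5]
  · simp only [if_neg h1, if_neg h2, if_neg h3, if_neg h4, if_neg h5]
    simp [h1, h2, h3, h4, h5]

/-- Explicit decreasing enumeration of the support. -/
def ff (n j : ℕ) : ℕ :=
  if j < 2 * n then 8 * n - 2 - 4 * (j / 2) - j % 2
  else if j = 2 * n then 4 * n - 1
  else 4 * ((4 * n - j) / 2) + (4 * n - j) % 2

lemma ff_anti (n : ℕ) (hn : 1 ≤ n) :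
    ∀ j₁ j₂, j₁ < j₂ → j₂ < 4 * n + 1 → ff n j₂ < ff n j₁ := by
  intro j₁ j₂ h hj
  unfold ff
  split_ifs <;> omega

lemma ff_image (n : ℕ) (hn : 1 ≤ n) (k : ℕ) :
    (∃ j < 4 * n + 1, ff n j = k) ↔
      ((∃ i < n, k = 4 * i) ∨ (∃ i < n, k = 4 * i + 1) ∨ k = 4 * n - 1 ∨
        (∃ i < n, k = 8 * n - 2 - 4 * i) ∨ (∃ i < n, k = 8 * n - 3 - 4 * i)) := by
  constructor
  · rintro ⟨j, hj, rfl⟩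
    unfold ff
    split_ifs with hlt heq
    · by_cases hp : j % 2 = 0
      · exact Or.inr (Or.inr (Or.inr (Or.inl ⟨j / 2, by omega, by omega⟩)))
      · exact Or.inr (Or.inr (Or.inr (Or.inr ⟨j / 2, by omega, by omega⟩)))
    · exact Or.inr (Or.inr (Or.inl rfl))
    · by_cases hp : (4 * n - j) % 2 = 0
      · exact Or.inl ⟨(4 * n - j) / 2, by omega, by omega⟩
      · exact Or.inr (Or.inl ⟨(4 * n - j) / 2, by omega, by omega⟩)
  · rintro (⟨i, hi, rfl⟩ | ⟨i, hi, rfl⟩ | rfl | ⟨i, hi, rfl⟩ | ⟨i, hi, rfl⟩)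
    · refine ⟨4 * n - 2 * i, by omega, ?_⟩
      unfold ff; split_ifs <;> omega
    · refine ⟨4 * n - 2 * i - 1, by omega, ?_⟩
      unfold ff; split_ifs <;> omega
    · refine ⟨2 * n, by omega, ?_⟩
      unfold ff; split_ifs <;> omega
    · refine ⟨2 * i, by omega, ?_⟩
      unfold ff; split_ifs <;> omega
    · refine ⟨2 * i + 1, by omega, ?_⟩
      unfold ff; split_ifs <;> omega

/-- If `e 0 > e 1 > ⋯ > e (4n)` enumerates the exponents with nonzero coefficient of
`Δ(t) = ∑_{i<n}(t^{4i}-t^{4i+1}) + t^{4n-1} + ∑_{i<n}(t^{8n-2-4i}-t^{8n-3-4i})` in decreasing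
order, then the gap list `(e 0 - e 1, e 2 - e 3, …)` is `(1 (n times), 2, 3 (n-1 times))`. -/
theorem stmt3 (n : ℕ) (hn : 1 ≤ n) (Δ : Polynomial ℤ)
    (hΔ : Δ = (∑ i ∈ range n, (X ^ (4 * i) - X ^ (4 * i + 1))) + X ^ (4 * n - 1) +
        ∑ i ∈ range n, (X ^ (8 * n - 2 - 4 * i) - X ^ (8 * n - 3 - 4 * i)))
    (e : ℕ → ℕ)
    (hanti : ∀ j₁ j₂, j₁ < j₂ → j₂ < 4 * n + 1 → e j₂ < e j₁)
    (hsupp : ∀ k, Δ.coeff k ≠ 0 ↔ ∃ j < 4 * n + 1, e j = k) :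
    ∀ j < 2 * n, e (2 * j) - e (2 * j + 1) =
      if j < n then 1 else if j = n then 2 else 3 := by
  have him : ∀ k, (∃ j < 4 * n + 1, e j = k) ↔ (∃ j < 4 * n + 1, ff n j = k) := by
    intro k
    rw [← hsupp k, hΔ, coeff_ne n hn k, ff_image n hn k]
  have heq := enum_unique (4 * n + 1) e (ff n) hanti (ff_anti n hn) him
  intro j hj
  rw [heq (2 * j) (by omega), heq (2 * j + 1) (by omega)]
  unfold ff
  split_ifs <;> omega
end

section
/- A riffle of two finite lists A and B is a list of length |A|+|B| which contains A and B as complementary sublists (preserving their orders). The lists S_n = ((1,3) repeated n-1 times, (1,2), (2,1), (3,1) repeated n-1 times) admit a compatible riffle of S_n with itself, namely R = ((1,3) repeated 2n-2 times, (1,2), (1,2), (2,1), (2,1), (3,1) repeated 2n-2 times), where a riffle of lists of ordered pairs is compatible if whenever (b,b') is the opposite successor of an element (a,a') coming from the first list then a ≤ b and a' ≥ b', and whenever (a,a') is the opposite successor of an element (b,b') coming from the second list then a ≥ b and a' ≤ b'. -/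
/-!
Riffle `S_n` with itself by taking each entry of `S_n` twice, first from the second copy and
then from the first. The tags then alternate, so the opposite successor of every position is the
next one: after a second-copy entry it is the same pair, and after a first-copy entry it is the
next entry of `S_n`. Compatibility thus reduces to `S_n` being a chain for
`a ≤ b ∧ a' ≥ b'`, which holds since its first coordinates weakly increase and its second weakly decrease.
-/

namespace List

variable {α : Type*}

def doubleRiffle (L : List α) : List (Bool × α) :=
  L.flatMap fun x => [(false, x), (true, x)]

@[simp]
theorem doubleRiffle_cons (a : α) (L : List α) :
    doubleRiffle (a :: L) = (false, a) :: (true, a) :: doubleRiffle L := rfl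

@[simp]
theorem length_doubleRiffle (L : List α) : (doubleRiffle L).length = 2 * L.length := by
  induction L with
  | nil => rfl
  | cons a L ih => simp only [doubleRiffle_cons, length_cons, ih]; ring

theorem getElem?_doubleRiffle (L : List α) (m : ℕ) :
    (doubleRiffle L)[m]? = L[m / 2]?.map fun x => (decide (m % 2 = 1), x) := by
  induction L generalizing m with
  | nil => simp
  | cons a L ih =>
    match m with
    | 0 | 1 => simp
    | m + 2 =>
      have hdiv : (m + 2) / 2 = m / 2 + 1 := by omega
      simp [hdiv, ih m]

theorem getD_doubleRiffle [Inhabited α] {L : List α} {m : ℕ} (hm : m < 2 * L.length) :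
    (doubleRiffle L).getD m default = (decide (m % 2 = 1), L.getD (m / 2) default) := by
  simp [getD_eq_getElem?_getD, getElem?_doubleRiffle,
    getElem?_eq_getElem (show m / 2 < L.length by omega)]

theorem filterMap_fst_doubleRiffle (L : List α) :
    ((doubleRiffle L).filterMap fun p => if p.1 then some p.2 else none) = L := by
  induction L with
  | nil => rfl
  | cons a L ih => simpa using ih

theorem filterMap_not_fst_doubleRiffle (L : List α) :
    ((doubleRiffle L).filterMap fun p => if p.1 then none else some p.2) = L := by
  induction L with
  | nil => rfl
  | cons a L ih => simpa using ih

theorem map_snd_doubleRiffle (L : List α) :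
    (doubleRiffle L).map Prod.snd = L.flatMap fun x => [x, x] := by
  induction L with
  | nil => rfl
  | cons a L ih => simpa using ih

theorem flatMap_replicate_pair (m : ℕ) (a : α) :
    (replicate m a).flatMap (fun x => [x, x]) = replicate (2 * m) a := by
  induction m with
  | zero => rfl
  | succ m ih => rw [replicate_succ, flatMap_cons, ih, Nat.mul_succ]; rfl

end List

open List

/-- `true` tags the entries from the first list; the last two hypotheses on `j` say that it is
the opposite successor of `i`. -/
def IsCompatibleRiffle (R : List (Bool × (ℕ × ℕ))) : Prop :=
  ∀ i j, i < j → j < R.length →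
    (R.getD i default).1 ≠ (R.getD j default).1 →
    (∀ l, i < l → l < j → (R.getD l default).1 = (R.getD i default).1) →
    ((R.getD i default).1 = true →
      (R.getD i default).2.1 ≤ (R.getD j default).2.1 ∧
        (R.getD j default).2.2 ≤ (R.getD i default).2.2) ∧
    ((R.getD i default).1 = false →
      (R.getD j default).2.1 ≤ (R.getD i default).2.1 ∧
        (R.getD i default).2.2 ≤ (R.getD j default).2.2)

theorem isCompatibleRiffle_doubleRiffle {L : List (ℕ × ℕ)}
    (hL : L.IsChain fun a b => a.1 ≤ b.1 ∧ b.2 ≤ a.2) :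
    IsCompatibleRiffle (doubleRiffle L) := by
  intro i j hij hj htag hbetween
  rw [length_doubleRiffle] at hj
  have hsucc : j = i + 1 := by
    by_contra hne
    have := hbetween (i + 1) (by omega) (by omega)
    rw [getD_doubleRiffle (by omega), getD_doubleRiffle (by omega)] at this
    simp only [decide_eq_decide] at this
    omega
  subst hsucc
  rw [getD_doubleRiffle (by omega), getD_doubleRiffle hj]
  rcases Nat.even_or_odd' i with ⟨k, rfl | rfl⟩
  · have hhalf : (2 * k + 1) / 2 = 2 * k / 2 := by omega
    simp [hhalf]
  · have hhalf : (2 * k + 1) / 2 = k := by omega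
    have hhalf' : (2 * k + 1 + 1) / 2 = k + 1 := by omega
    rw [hhalf, hhalf', getD_eq_getElem _ _ (by omega), getD_eq_getElem _ _ (by omega)]
    simpa [Nat.add_mod] using isChain_iff_getElem.1 hL k (by omega)

def staircase (n : ℕ) : List (ℕ × ℕ) :=
  replicate (n - 1) (1, 3) ++ [(1, 2), (2, 1)] ++ replicate (n - 1) (3, 1)

theorem isChain_staircase (n : ℕ) :
    (staircase n).IsChain fun a b => a.1 ≤ b.1 ∧ b.2 ≤ a.2 := by
  refine Pairwise.isChain ?_
  simp [staircase, pairwise_append, pairwise_replicate, or_imp, forall_and]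

theorem map_snd_doubleRiffle_staircase (n : ℕ) :
    (doubleRiffle (staircase n)).map Prod.snd =
      replicate (2 * n - 2) (1, 3) ++ [(1, 2), (1, 2), (2, 1), (2, 1)] ++
        replicate (2 * n - 2) (3, 1) := by
  rw [map_snd_doubleRiffle, staircase, flatMap_append, flatMap_append, flatMap_replicate_pair,
    flatMap_replicate_pair, Nat.mul_sub_one]
  rfl

theorem stmt4_general (n : ℕ) :
    ∃ R : List (Bool × (ℕ × ℕ)),
      R.map Prod.snd =
        List.replicate (2 * n - 2) (1, 3) ++ [(1, 2), (1, 2), (2, 1), (2, 1)] ++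
          List.replicate (2 * n - 2) (3, 1) ∧
      (R.filterMap fun p => if p.1 then some p.2 else none) =
        List.replicate (n - 1) (1, 3) ++ [(1, 2), (2, 1)] ++ List.replicate (n - 1) (3, 1) ∧
      (R.filterMap fun p => if p.1 then none else some p.2) =
        List.replicate (n - 1) (1, 3) ++ [(1, 2), (2, 1)] ++ List.replicate (n - 1) (3, 1) ∧
      (∀ i j, i < j → j < R.length →
        (R.getD i default).1 ≠ (R.getD j default).1 →
        (∀ l, i < l → l < j → (R.getD l default).1 = (R.getD i default).1) →
        ((R.getD i default).1 = true →
          (R.getD i default).2.1 ≤ (R.getD j default).2.1 ∧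
            (R.getD j default).2.2 ≤ (R.getD i default).2.2) ∧
        ((R.getD i default).1 = false →
          (R.getD j default).2.1 ≤ (R.getD i default).2.1 ∧
            (R.getD i default).2.2 ≤ (R.getD j default).2.2)) :=
  ⟨doubleRiffle (staircase n), map_snd_doubleRiffle_staircase n,
    filterMap_fst_doubleRiffle _, filterMap_not_fst_doubleRiffle _,
    isCompatibleRiffle_doubleRiffle (isChain_staircase n)⟩

/-- The staircase shape `S_n = ((1,3)^{n-1}, (1,2), (2,1), (3,1)^{n-1})` admits a compatible
riffle with itself, whose underlying list is
`((1,3)^{2n-2}, (1,2), (1,2), (2,1), (2,1), (3,1)^{2n-2})`.  A riffle is encoded as a tagged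
list `R : List (Bool × (ℕ × ℕ))`, the `true`-tagged entries forming the first copy of `S_n` and
the `false`-tagged entries the second; compatibility is the stated condition on each element and
its opposite successor (the first subsequent entry with the opposite tag). -/
theorem stmt4 (n : ℕ) (hn : 1 ≤ n) :
    ∃ R : List (Bool × (ℕ × ℕ)),
      R.map Prod.snd =
        List.replicate (2 * n - 2) (1, 3) ++ [(1, 2), (1, 2), (2, 1), (2, 1)] ++
          List.replicate (2 * n - 2) (3, 1) ∧
      (R.filterMap fun p => if p.1 then some p.2 else none) =
        List.replicate (n - 1) (1, 3) ++ [(1, 2), (2, 1)] ++ List.replicate (n - 1) (3, 1) ∧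
      (R.filterMap fun p => if p.1 then none else some p.2) =
        List.replicate (n - 1) (1, 3) ++ [(1, 2), (2, 1)] ++ List.replicate (n - 1) (3, 1) ∧
      (∀ i j, i < j → j < R.length →
        (R.getD i default).1 ≠ (R.getD j default).1 →
        (∀ l, i < l → l < j → (R.getD l default).1 = (R.getD i default).1) →
        ((R.getD i default).1 = true →
          (R.getD i default).2.1 ≤ (R.getD j default).2.1 ∧
            (R.getD j default).2.2 ≤ (R.getD i default).2.2) ∧
        ((R.getD i default).1 = false →
          (R.getD j default).2.1 ≤ (R.getD i default).2.1 ∧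
            (R.getD i default).2.2 ≤ (R.getD j default).2.2)) :=
  stmt4_general n
end

section
/- Let S and S' be staircase complexes with lists (a_1,…,a_n) and (b_1,…,b_m). Then the tensor product S ⊗ S' over 𝔽₂ decomposes as a direct sum of chain complexes: S ⊗ S' ≅ S# ⊕ ⊕_{i=1}^{n} ⊕_{j=1}^{m} A_{i,j}, where S# is a staircase complex with 2(n+m)+1 generators and each A_{i,j} is an acyclic 4-dimensional complex. -/
/-!
Put `e_{a,b} = x_a ⊗ y_b` (0-indexed). The vectors `e_{a,0}` (`a ≤ 2n`) followed by `e_{2n,b}`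
(`b ≥ 1`) form a staircase, and for each `i < n`, `j < m` the four vectors
`e_{2i+1,2j+1}`, `e_{2i,2j+1} + e_{2i+1,2j}`, `e_{2i+2,2j+1} + e_{2i+1,2j+2}`,
`e_{2i,2j+2} + e_{2i+2,2j}` span a subcomplex `𝔽₂ → 𝔽₂² → 𝔽₂`, which is acyclic because the
two middle vectors have the same boundary and their sum is the boundary of the first one.
Every `e_{a,b}` off the staircase is one term of a square vector whose other term has smaller `b`,
so together these vectors span, and since there are `2(n+m)+1 + 4nm = (2n+1)(2m+1)` of them
they form a basis.
-/

open Submodule Set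

theorem Module.Basis.isInternal_span_sigma {R M ι : Type*} {κ : ι → Type*} [DecidableEq ι]
    [Ring R] [AddCommGroup M] [Module R M] (b : Module.Basis (Σ i, κ i) R M) :
    DirectSum.IsInternal fun i => span R (range fun k => b ⟨i, k⟩) := by
  have fiber : ∀ i, range (fun k => b ⟨i, k⟩) = b '' (Sigma.fst ⁻¹' {i}) := by
    intro i
    ext x
    simp [Sigma.exists]
  refine (DirectSum.isInternal_submodule_iff_iSupIndep_and_iSup_eq_top _).2 ⟨?_, ?_⟩
  · refine iSupIndep_def.2 fun i => ?_
    rw [fiber]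
    refine (b.linearIndependent.disjoint_span_image (t := Sigma.fst ⁻¹' {i}ᶜ)
      (disjoint_compl_right.preimage _)).mono_right (iSup₂_le fun j hj => ?_)
    rw [fiber]
    exact span_mono (image_mono fun x hx => hj ∘ hx.symm.trans)
  · rw [← span_iUnion, ← range_sigma_eq_iUnion_range, b.span_eq]

theorem Fin.val_sub_one_of_odd {k : ℕ} {p : Fin (2 * k + 1)} (hp : (p : ℕ) % 2 = 1) :
    ((p - 1 : Fin (2 * k + 1)) : ℕ) = p - 1 :=
  Fin.val_sub_one_of_ne_zero fun h => by simp [h] at hp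

theorem Fin.val_add_one_of_odd {k : ℕ} {p : Fin (2 * k + 1)} (hp : (p : ℕ) % 2 = 1) :
    ((p + 1 : Fin (2 * k + 1)) : ℕ) = p + 1 :=
  Fin.val_add_one_of_lt' (by omega)

section Square

variable {R M : Type*} {q : Fin 4 → M}

theorem map_mem_span_square [Semiring R] [AddCommMonoid M] [Module R M] {D : M →ₗ[R] M}
    (h0 : D (q 0) = q 1 + q 2) (h1 : D (q 1) = q 3) (h2 : D (q 2) = q 3) (h3 : D (q 3) = 0) :
    ∀ v ∈ span R (range q), D v ∈ span R (range q) := by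
  refine fun v hv => span_le (p := (span R (range q)).comap D) |>.2 ?_ hv
  rintro _ ⟨t, rfl⟩
  have mem : ∀ s, q s ∈ span R (range q) := fun s => subset_span ⟨s, rfl⟩
  fin_cases t
  · simpa [h0] using add_mem (mem 1) (mem 2)
  · simpa [h1] using mem 3
  · simpa [h2] using mem 3
  · simp [h3]

theorem exists_map_eq_of_map_eq_zero_square [CommRing R] [CharP R 2] [AddCommGroup M]
    [Module R M] {D : M →ₗ[R] M} (hq : LinearIndependent R q)
    (h0 : D (q 0) = q 1 + q 2) (h1 : D (q 1) = q 3) (h2 : D (q 2) = q 3) (h3 : D (q 3) = 0) :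
    ∀ v ∈ span R (range q), D v = 0 → ∃ w ∈ span R (range q), D w = v := by
  intro v hv hDv
  obtain ⟨c, rfl⟩ := (mem_span_range_iff_exists_fun R).1 hv
  have hcycle : c 0 • (q 1 + q 2) + (c 1 + c 2) • q 3 = 0 := by
    rw [← hDv]
    simp only [Fin.sum_univ_four, map_add, map_smul, h0, h1, h2, h3]
    module
  have hc := Fintype.linearIndependent_iff.1 hq ![0, c 0, c 0, c 1 + c 2]
    (by rw [← hcycle]; simp [Fin.sum_univ_four])
  have hc0 : c 0 = 0 := hc 1
  have hc2 : c 2 = c 1 := by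
    rw [← CharTwo.neg_eq (c 1), eq_neg_iff_add_eq_zero, add_comm]
    exact hc 3
  refine ⟨c 1 • q 0 + c 3 • q 1,
    add_mem (smul_mem _ _ (subset_span ⟨0, rfl⟩)) (smul_mem _ _ (subset_span ⟨1, rfl⟩)), ?_⟩
  simp only [map_add, map_smul, h0, h1, Fin.sum_univ_four, hc0, hc2]
  module

end Square

namespace StaircaseTensor

/-- The generator `x_a ⊗ y_b` (0-indexed), and `0` when `(a, b)` lies outside the grid. -/
def gen (n m a b : ℕ) : Fin (2 * n + 1) × Fin (2 * m + 1) → ZMod 2 :=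
  fun x => if (x.1 : ℕ) = a ∧ (x.2 : ℕ) = b then 1 else 0

variable {n m : ℕ}

theorem single_eq_gen (p : Fin (2 * n + 1)) (q : Fin (2 * m + 1)) :
    Pi.single (p, q) 1 = gen n m p q := by
  ext x
  simp [gen, Pi.single_apply, Prod.ext_iff, Fin.ext_iff]

/-- The basis of the acyclic summand `A_{i+1,j+1}`. -/
def square (n m i j : ℕ) : Fin 4 → Fin (2 * n + 1) × Fin (2 * m + 1) → ZMod 2
  | 0 => gen n m (2 * i + 1) (2 * j + 1)
  | 1 => gen n m (2 * i) (2 * j + 1) + gen n m (2 * i + 1) (2 * j)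
  | 2 => gen n m (2 * i + 2) (2 * j + 1) + gen n m (2 * i + 1) (2 * j + 2)
  | 3 => gen n m (2 * i) (2 * j + 2) + gen n m (2 * i + 2) (2 * j)

/-- The generators of the staircase summand: along the row `b = 0`, then up the column `a = 2n`. -/
def stair (n m k : ℕ) : Fin (2 * n + 1) × Fin (2 * m + 1) → ZMod 2 :=
  gen n m (min k (2 * n)) (k - 2 * n)

theorem stair_of_le {k : ℕ} (hk : k ≤ 2 * n) : stair n m k = gen n m k 0 := by
  simp [stair, hk]

theorem stair_two_mul_add (b : ℕ) : stair n m (2 * n + b) = gen n m (2 * n) b := by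
  simp [stair]

/-- `none` indexes the staircase block, `some (i, j)` the square block `A_{i+1,j+1}`. -/
abbrev Index (n m : ℕ) : Type :=
  Σ o : Option (Fin n × Fin m), Fin (o.elim (2 * (n + m) + 1) fun _ => 4)

def family : Index n m → Fin (2 * n + 1) × Fin (2 * m + 1) → ZMod 2
  | ⟨none, k⟩ => stair n m k
  | ⟨some ij, t⟩ => square n m ij.1 ij.2 t

theorem gen_mem_span_family {a b : ℕ} (ha : a < 2 * n + 1) (hb : b < 2 * m + 1) :
    gen n m a b ∈ span (ZMod 2) (range (family (n := n) (m := m))) := by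
  induction b using Nat.strong_induction_on generalizing a with
  | _ b ih =>
  set T := span (ZMod 2) (range (family (n := n) (m := m)))
  have stair_mem (k : ℕ) (hk : k < 2 * (n + m) + 1) : stair n m k ∈ T :=
    subset_span ⟨⟨none, ⟨k, hk⟩⟩, rfl⟩
  have square_mem {i j : ℕ} (hi : i < n) (hj : j < m) (t : Fin 4) : square n m i j t ∈ T :=
    subset_span ⟨⟨some (⟨i, hi⟩, ⟨j, hj⟩), t⟩, rfl⟩
  have of_add {a' b' : ℕ} (hb' : b' < b) (ha' : a' < 2 * n + 1)
      (h : gen n m a b + gen n m a' b' ∈ T) : gen n m a b ∈ T :=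
    (Submodule.add_mem_iff_left _ (ih b' hb' ha' (by omega))).1 h
  rcases Nat.eq_zero_or_pos b with rfl | hb0
  · simpa [stair_of_le (m := m) (Nat.le_of_lt_succ ha)] using stair_mem a (by omega)
  rcases (Nat.le_of_lt_succ ha).eq_or_lt with rfl | ha'
  · simpa [stair_two_mul_add] using stair_mem (2 * n + b) (by omega)
  obtain ⟨i, rfl | rfl⟩ := Nat.even_or_odd' a <;> obtain ⟨j, rfl | rfl⟩ := Nat.even_or_odd' b
  · obtain ⟨j, rfl⟩ := Nat.exists_eq_add_one_of_ne_zero (by omega : j ≠ 0)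
    refine of_add (a' := 2 * i + 2) (b' := 2 * j) (by omega) (by omega) ?_
    simpa [square, mul_add] using square_mem (i := i) (j := j) (by omega) (by omega) 3
  · exact of_add (by omega) (by omega) (square_mem (i := i) (j := j) (by omega) (by omega) 1)
  · obtain ⟨j, rfl⟩ := Nat.exists_eq_add_one_of_ne_zero (by omega : j ≠ 0)
    refine of_add (a' := 2 * i + 2) (b' := 2 * j + 1) (by omega) (by omega) ?_
    simpa [square, mul_add, add_comm] using square_mem (i := i) (j := j) (by omega) (by omega) 2
  · exact square_mem (by omega) (by omega) 0

theorem top_le_span_family : ⊤ ≤ span (ZMod 2) (range (family (n := n) (m := m))) := by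
  rw [← (Pi.basisFun (ZMod 2) _).span_eq, span_le]
  rintro _ ⟨⟨p, q⟩, rfl⟩
  rw [Pi.basisFun_apply, single_eq_gen]
  exact gen_mem_span_family p.isLt q.isLt

noncomputable def basis :
    Module.Basis (Index n m) (ZMod 2) (Fin (2 * n + 1) × Fin (2 * m + 1) → ZMod 2) :=
  basisOfTopLeSpanOfCardEqFinrank family top_le_span_family (by simp; ring)

def IsTensorDifferential (n m : ℕ)
    (D : (Fin (2 * n + 1) × Fin (2 * m + 1) → ZMod 2) →ₗ[ZMod 2]
         (Fin (2 * n + 1) × Fin (2 * m + 1) → ZMod 2)) : Prop :=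
  ∀ (p : Fin (2 * n + 1)) (q : Fin (2 * m + 1)),
    D (Pi.single (p, q) 1) =
      (if (p : ℕ) % 2 = 1 then Pi.single (p - 1, q) 1 + Pi.single (p + 1, q) 1 else 0) +
      (if (q : ℕ) % 2 = 1 then Pi.single (p, q - 1) 1 + Pi.single (p, q + 1) 1 else 0)

section Differential

variable {D : (Fin (2 * n + 1) × Fin (2 * m + 1) → ZMod 2) →ₗ[ZMod 2]
    (Fin (2 * n + 1) × Fin (2 * m + 1) → ZMod 2)}

theorem IsTensorDifferential.map_gen (hD : IsTensorDifferential n m D) {a b : ℕ}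
    (ha : a < 2 * n + 1) (hb : b < 2 * m + 1) :
    D (gen n m a b) =
      (if a % 2 = 1 then gen n m (a - 1) b + gen n m (a + 1) b else 0) +
      (if b % 2 = 1 then gen n m a (b - 1) + gen n m a (b + 1) else 0) := by
  have h := hD ⟨a, ha⟩ ⟨b, hb⟩
  simp only [single_eq_gen] at h
  rw [h]
  congr 1 <;> split_ifs with hodd
  all_goals simp [Fin.val_sub_one_of_odd, Fin.val_add_one_of_odd, hodd]

theorem IsTensorDifferential.map_gen_even_even (hD : IsTensorDifferential n m D) {i j : ℕ}
    (hi : i ≤ n) (hj : j ≤ m) : D (gen n m (2 * i) (2 * j)) = 0 := by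
  simp [hD.map_gen (a := 2 * i) (b := 2 * j) (by omega) (by omega)]

theorem IsTensorDifferential.map_gen_odd_even (hD : IsTensorDifferential n m D) {i j : ℕ}
    (hi : i < n) (hj : j ≤ m) :
    D (gen n m (2 * i + 1) (2 * j)) = gen n m (2 * i) (2 * j) + gen n m (2 * i + 2) (2 * j) := by
  simp [hD.map_gen (a := 2 * i + 1) (b := 2 * j) (by omega) (by omega), Nat.add_mod]

theorem IsTensorDifferential.map_gen_even_odd (hD : IsTensorDifferential n m D) {i j : ℕ}
    (hi : i ≤ n) (hj : j < m) :
    D (gen n m (2 * i) (2 * j + 1)) = gen n m (2 * i) (2 * j) + gen n m (2 * i) (2 * j + 2) := by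
  simp [hD.map_gen (a := 2 * i) (b := 2 * j + 1) (by omega) (by omega), Nat.add_mod]

theorem IsTensorDifferential.map_gen_odd_odd (hD : IsTensorDifferential n m D) {i j : ℕ}
    (hi : i < n) (hj : j < m) :
    D (gen n m (2 * i + 1) (2 * j + 1)) =
      gen n m (2 * i) (2 * j + 1) + gen n m (2 * i + 2) (2 * j + 1) +
        (gen n m (2 * i + 1) (2 * j) + gen n m (2 * i + 1) (2 * j + 2)) := by
  simp [hD.map_gen (a := 2 * i + 1) (b := 2 * j + 1) (by omega) (by omega), Nat.add_mod]

theorem IsTensorDifferential.map_square_zero (hD : IsTensorDifferential n m D) {i j : ℕ}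
    (hi : i < n) (hj : j < m) :
    D (square n m i j 0) = square n m i j 1 + square n m i j 2 := by
  simp only [square, hD.map_gen_odd_odd hi hj]
  abel

theorem IsTensorDifferential.map_square_one (hD : IsTensorDifferential n m D) {i j : ℕ}
    (hi : i < n) (hj : j < m) :
    D (square n m i j 1) = square n m i j 3 := by
  simp only [square, map_add, hD.map_gen_even_odd hi.le hj, hD.map_gen_odd_even hi hj.le]
  linear_combination CharTwo.add_self_eq_zero (gen n m (2 * i) (2 * j))

theorem IsTensorDifferential.map_square_two (hD : IsTensorDifferential n m D) {i j : ℕ}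
    (hi : i < n) (hj : j < m) :
    D (square n m i j 2) = square n m i j 3 := by
  have h := hD.map_gen_odd_even hi (j := j + 1) hj
  have h' := hD.map_gen_even_odd (i := i + 1) hi hj
  simp only [mul_add, mul_one] at h h'
  simp only [square, map_add, h, h']
  linear_combination CharTwo.add_self_eq_zero (gen n m (2 * i + 2) (2 * j + 2))

theorem IsTensorDifferential.map_square_three (hD : IsTensorDifferential n m D) {i j : ℕ}
    (hi : i < n) (hj : j < m) : D (square n m i j 3) = 0 := by
  have h := hD.map_gen_even_even hi.le (j := j + 1) hj
  have h' := hD.map_gen_even_even (i := i + 1) hi hj.le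
  simp only [mul_add, mul_one] at h h'
  simp [square, h, h']

theorem IsTensorDifferential.map_stair_even (hD : IsTensorDifferential n m D) {k : ℕ}
    (hk : 2 * k < 2 * (n + m) + 1) : D (stair n m (2 * k)) = 0 := by
  rcases le_or_gt k n with h | h
  · rw [stair_of_le (by omega)]
    exact hD.map_gen_even_even (j := 0) h (Nat.zero_le m)
  · obtain ⟨j, rfl⟩ := Nat.exists_eq_add_of_le h.le
    rw [mul_add, stair_two_mul_add]
    exact hD.map_gen_even_even le_rfl (by omega)

theorem IsTensorDifferential.map_stair_odd (hD : IsTensorDifferential n m D) {k : ℕ}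
    (hk : 2 * k + 1 < 2 * (n + m) + 1) :
    D (stair n m (2 * k + 1)) = stair n m (2 * k) + stair n m (2 * k + 2) := by
  rcases lt_or_ge k n with h | h
  · rw [stair_of_le (by omega), stair_of_le (by omega), stair_of_le (by omega)]
    exact hD.map_gen_odd_even (j := 0) h (Nat.zero_le m)
  · obtain ⟨j, rfl⟩ := Nat.exists_eq_add_of_le h
    rw [mul_add, add_assoc, add_assoc, stair_two_mul_add, stair_two_mul_add, stair_two_mul_add]
    exact hD.map_gen_even_odd le_rfl (by omega)

end Differential

end StaircaseTensor

open StaircaseTensor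

/-- The tensor product of two staircase complexes over `𝔽₂` (with `n` resp. `m` steps)
decomposes as a direct sum of chain complexes `S# ⊕ ⊕_{i,j} A_{i,j}`, where `S#` is a
staircase complex with `2(n+m)+1` generators and each `A_{i,j}` is a `D`-invariant acyclic
4-dimensional complex. -/
theorem stmt12 (n m : ℕ)
    (D : (Fin (2 * n + 1) × Fin (2 * m + 1) → ZMod 2) →ₗ[ZMod 2]
         (Fin (2 * n + 1) × Fin (2 * m + 1) → ZMod 2))
    (hD : ∀ (p : Fin (2 * n + 1)) (q : Fin (2 * m + 1)),
      D (Pi.single (p, q) 1) =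
        (if (p : ℕ) % 2 = 1 then Pi.single (p - 1, q) 1 + Pi.single (p + 1, q) 1 else 0) +
        (if (q : ℕ) % 2 = 1 then Pi.single (p, q - 1) 1 + Pi.single (p, q + 1) 1 else 0)) :
    ∃ (Ssub : Submodule (ZMod 2) (Fin (2 * n + 1) × Fin (2 * m + 1) → ZMod 2))
      (A : Fin n → Fin m → Submodule (ZMod 2) (Fin (2 * n + 1) × Fin (2 * m + 1) → ZMod 2)),
      -- direct sum decomposition of the underlying module
      iSupIndep
        (fun o : Option (Fin n × Fin m) => o.elim Ssub (fun ij => A ij.1 ij.2)) ∧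
      (⨆ o : Option (Fin n × Fin m), o.elim Ssub (fun ij => A ij.1 ij.2)) = ⊤ ∧
      -- `Ssub` is a staircase complex with `2(n+m)+1` generators
      (∃ b : Fin (2 * (n + m) + 1) → (Fin (2 * n + 1) × Fin (2 * m + 1) → ZMod 2),
        LinearIndependent (ZMod 2) b ∧
        Submodule.span (ZMod 2) (Set.range b) = Ssub ∧
        (∀ k (h : 2 * k + 1 < 2 * (n + m) + 1),
          D (b ⟨2 * k + 1, h⟩) = b ⟨2 * k, by omega⟩ + b ⟨2 * k + 2, by omega⟩) ∧
        (∀ k (h : 2 * k < 2 * (n + m) + 1), D (b ⟨2 * k, h⟩) = 0)) ∧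
      -- each `A i j` is a `D`-invariant acyclic 4-dimensional subcomplex
      (∀ i j, (∀ v ∈ A i j, D v ∈ A i j) ∧
        Module.finrank (ZMod 2) (A i j) = 4 ∧
        (∀ v ∈ A i j, D v = 0 → ∃ w ∈ A i j, D w = v)) := by
  have hD : IsTensorDifferential n m D := hD
  have hli : LinearIndependent (ZMod 2) (family (n := n) (m := m)) := by
    simpa [basis] using (basis (n := n) (m := m)).linearIndependent
  have blocks : ∀ o : Option (Fin n × Fin m),
      span (ZMod 2) (range fun k => basis ⟨o, k⟩) =
        o.elim (span (ZMod 2) (range fun k : Fin (2 * (n + m) + 1) => stair n m k))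
          fun ij => span (ZMod 2) (range (square n m ij.1 ij.2)) := by
    rintro (_ | _) <;> simp [basis, family]
  obtain ⟨hindep, htop⟩ := (DirectSum.isInternal_submodule_iff_iSupIndep_and_iSup_eq_top _).1
    (basis (n := n) (m := m)).isInternal_span_sigma
  simp only [blocks] at hindep htop
  have hstair : LinearIndependent (ZMod 2) fun k : Fin (2 * (n + m) + 1) => stair n m k :=
    hli.comp (Sigma.mk none) sigma_mk_injective
  refine ⟨span (ZMod 2) (range fun k : Fin (2 * (n + m) + 1) => stair n m k),
    fun i j => span (ZMod 2) (range (square n m i j)), hindep, htop,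
    ⟨_, hstair, rfl, fun k hk => hD.map_stair_odd hk, fun k hk => hD.map_stair_even hk⟩,
    fun i j => ?_⟩
  have hq : LinearIndependent (ZMod 2) (square n m i j) :=
    hli.comp (Sigma.mk (some (i, j))) sigma_mk_injective
  have h0 := hD.map_square_zero i.isLt j.isLt
  have h1 := hD.map_square_one i.isLt j.isLt
  have h2 := hD.map_square_two i.isLt j.isLt
  have h3 := hD.map_square_three i.isLt j.isLt
  exact ⟨map_mem_span_square h0 h1 h2 h3, finrank_span_eq_card hq,
    exists_map_eq_of_map_eq_zero_square hq h0 h1 h2 h3⟩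
end
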